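/- Let r be the root of a rooted tree-decomposition of G, so G_r = G. For a guessing g on X_r with Z_3(g) = ∅, every partial ve-dominating set of g on G_r is a ve-dominating set of G. Consequently, γ_ve(G) equals the minimum of D(g) over all valid guessings g on X_r with Z_3(g) = ∅. -/

import Mathlib

/-- `(T, X)` is a tree-decomposition of `G`: `T` is a tree, every vertex of `G`
is in some bag, every edge of `G` has both endpoints in some common bag, and for
every node `j` on the (unique) path between nodes `i` and `k` of `T`, we have
`X i ∩ X k ⊆ X j`. -/
def IsTreeDecomp {V ι : Type*} (G : SimpleGraph V) (T : SimpleGraph ι) (X : ι → Set V) : Prop :=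
  T.IsTree ∧
  (∀ v : V, ∃ i : ι, v ∈ X i) ∧
  (∀ u v : V, G.Adj u v → ∃ i : ι, u ∈ X i ∧ v ∈ X i) ∧
  (∀ i k : ι, ∀ p : T.Walk i k, p.IsPath → ∀ j ∈ p.support, X i ∩ X k ⊆ X j)

/-- With respect to the root `r`, the node `k` lies in the subtree rooted at `j`
(i.e. `k` is `j` or a descendant of `j`): every path from `r` to `k` passes
through `j`. -/
def InSubtree {ι : Type*} (T : SimpleGraph ι) (r j k : ι) : Prop :=
  ∀ p : T.Walk r k, p.IsPath → j ∈ p.support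

/-- With respect to the root `r`, the node `j` is a child of the node `i`. -/
def IsChild {ι : Type*} (T : SimpleGraph ι) (r i j : ι) : Prop :=
  T.Adj i j ∧ InSubtree T r i j

/-- `V_i`: the union of the bags over the subtree rooted at `i`. -/
def SubtreeVerts {V ι : Type*} (T : SimpleGraph ι) (X : ι → Set V) (r i : ι) : Set V :=
  ⋃ k ∈ {k : ι | InSubtree T r i k}, X k

/-- `S` is an independent set of `G`. -/
def IsIndepSet' {V : Type*} (G : SimpleGraph V) (S : Set V) : Prop :=
  ∀ u ∈ S, ∀ v ∈ S, ¬ G.Adj u v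

/-- `Z_d(g)`: the vertices of the bag `Xi` with label `d` under the guessing `g`. -/
def Zset {V : Type*} (Xi : Set V) (g : V → ℕ) (d : ℕ) : Set V :=
  {x ∈ Xi | g x = d}

/-- `g` is a guessing on the bag `Xi`: it assigns to each vertex of `Xi`
one of the digits `1,2,3,4`. -/
def IsGuess {V : Type*} (Xi : Set V) (g : V → ℕ) : Prop :=
  ∀ x ∈ Xi, g x ∈ ({1, 2, 3, 4} : Set ℕ)

/-- The open neighborhood `N_{G[A]}(S)` of `S` in the subgraph of `G` induced by `A`. -/
def nbrIn {V : Type*} (G : SimpleGraph V) (A S : Set V) : Set V :=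
  {v ∈ A | v ∉ S ∧ ∃ s ∈ S, G.Adj s v}

/-- The closed neighborhood `N_{G[A]}[S]` of `S` in the subgraph of `G` induced by `A`. -/
def closedNbrIn {V : Type*} (G : SimpleGraph V) (A S : Set V) : Set V :=
  {v ∈ A | v ∈ S ∨ ∃ s ∈ S, G.Adj s v}

/-- `S` is a partial ve-dominating set of the guessing `g` on `G_i = G[Vi]`
(with bag `Xi`). -/
def IsPartialVeDom {V : Type*} (G : SimpleGraph V) (Vi Xi : Set V) (g : V → ℕ)
    (S : Set V) : Prop :=
  S ⊆ Vi ∧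
  S ∩ Xi = Zset Xi g 1 ∧
  Zset Xi g 2 ⊆ nbrIn G Vi S ∧
  Zset Xi g 3 ∩ closedNbrIn G Vi S = ∅ ∧
  Zset Xi g 4 ∩ closedNbrIn G Vi S = ∅ ∧
  IsIndepSet' G ((Vi \ closedNbrIn G Vi S) \ Zset Xi g 3)

/-- A guessing `g` on the bag `Xi` is valid: no edge between `Z_1(g)` and
`Z_4(g)`, no edge between `Z_1(g)` and `Z_3(g)`, and `Z_4(g)` is independent. -/
def ValidGuess {V : Type*} (G : SimpleGraph V) (Xi : Set V) (g : V → ℕ) : Prop :=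
  (∀ x ∈ Zset Xi g 1, ∀ y ∈ Zset Xi g 4, ¬ G.Adj x y) ∧
  (∀ x ∈ Zset Xi g 1, ∀ y ∈ Zset Xi g 3, ¬ G.Adj x y) ∧
  IsIndepSet' G (Zset Xi g 4)

/-- The partial ve-domination number `D(g)` of a guessing `g`: the minimum size
of a partial ve-dominating set of `g` on `G[Vi]`, or `+∞` if none exists. -/
noncomputable def Dnum {V : Type*} (G : SimpleGraph V) (Vi Xi : Set V) (g : V → ℕ) : ℕ∞ :=
  sInf {n : ℕ∞ | ∃ S : Set V, IsPartialVeDom G Vi Xi g S ∧ (S.ncard : ℕ∞) = n}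

/-- The closed neighborhood `N[D]` of a vertex set `D` in a simple graph `G`. -/
def closedNbhd {V : Type*} (G : SimpleGraph V) (D : Set V) : Set V :=
  D ∪ {v | ∃ d ∈ D, G.Adj d v}

/-- `D` is a vertex-edge dominating set. -/
def IsVeDomSet {V : Type*} (G : SimpleGraph V) (D : Set V) : Prop :=
  ∀ u v : V, G.Adj u v →
    ∃ w ∈ D, u ∈ closedNbhd G {w} ∨ v ∈ closedNbhd G {w}

/-- The ve-domination number `γ_ve(G)` (valued in `ℕ∞`). -/
noncomputable def veDomNumE {V : Type*} (G : SimpleGraph V) : ℕ∞ :=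
  sInf {n : ℕ∞ | ∃ D : Set V, IsVeDomSet G D ∧ (D.ncard : ℕ∞) = n}

/-!
At the root every vertex lies in `G_r = G`, so the neighbourhoods relative to `G_r` are the
ordinary ones, and with `Z_3(g) = ∅` the last condition of a partial ve-dominating set says
exactly that `V(G) - N[S]` is independent, i.e. that `S` ve-dominates `G`. Conversely a
ve-dominating set `D` is a partial ve-dominating set of the guessing labelling `D` by `1`,
`N[D] - D` by `2` and everything else by `4`; this guessing is valid and has `Z_3 = ∅`.
-/

open Set

section Graph

variable {V : Type*} {G : SimpleGraph V}

lemma mem_closedNbhd_singleton {v w : V} :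
    v ∈ closedNbhd G {w} ↔ v = w ∨ G.Adj w v := by
  simp [closedNbhd]

lemma mem_closedNbhd_iff_exists {D : Set V} {v : V} :
    v ∈ closedNbhd G D ↔ ∃ w ∈ D, v ∈ closedNbhd G {w} := by
  simp only [mem_closedNbhd_singleton]
  constructor
  · rintro (hv | ⟨w, hw, hwv⟩)
    · exact ⟨v, hv, Or.inl rfl⟩
    · exact ⟨w, hw, Or.inr hwv⟩
  · rintro ⟨w, hw, rfl | hwv⟩
    · exact Or.inl hw
    · exact Or.inr ⟨w, hw, hwv⟩

lemma closedNbrIn_univ (S : Set V) : closedNbrIn G univ S = closedNbhd G S := by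
  ext v
  simp [closedNbrIn, closedNbhd]

theorem isVeDomSet_iff_isIndepSet_compl_closedNbhd {D : Set V} :
    IsVeDomSet G D ↔ IsIndepSet' G (closedNbhd G D)ᶜ := by
  simp only [IsVeDomSet, IsIndepSet', mem_compl_iff, and_or_left, exists_or,
    ← mem_closedNbhd_iff_exists]
  constructor
  · intro hD u hu v hv huv
    exact (hD u v huv).elim hu hv
  · intro hD u v huv
    by_contra! h
    exact hD u h.1 v h.2 huv

theorem IsPartialVeDom.isVeDomSet {Xi S : Set V} {g : V → ℕ}
    (hS : IsPartialVeDom G univ Xi g S) (h3 : Zset Xi g 3 = ∅) : IsVeDomSet G S := by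
  have hind := hS.2.2.2.2.2
  rw [h3, sdiff_empty, closedNbrIn_univ, ← compl_eq_univ_sdiff] at hind
  exact (isVeDomSet_iff_isIndepSet_compl_closedNbhd).2 hind

end Graph

lemma subtreeVerts_self_eq_univ {V ι : Type*} (T : SimpleGraph ι) (X : ι → Set V) (r : ι)
    (hcover : ∀ v, ∃ i, v ∈ X i) : SubtreeVerts T X r r = univ := by
  refine eq_univ_of_forall fun v => ?_
  obtain ⟨i, hi⟩ := hcover v
  exact mem_biUnion (fun _ _ => SimpleGraph.Walk.start_mem_support _) hi

section GuessOf

variable {V : Type*} (G : SimpleGraph V) (D : Set V)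

open Classical in
noncomputable def guessOf : V → ℕ :=
  fun x => if x ∈ D then 1 else if x ∈ closedNbhd G D then 2 else 4

variable {G D}

lemma guessOf_eq_one_iff {x : V} : guessOf G D x = 1 ↔ x ∈ D := by
  unfold guessOf; split_ifs <;> simp_all

lemma guessOf_eq_two_iff {x : V} : guessOf G D x = 2 ↔ x ∉ D ∧ x ∈ closedNbhd G D := by
  unfold guessOf; split_ifs <;> simp_all

lemma guessOf_eq_four_iff {x : V} : guessOf G D x = 4 ↔ x ∉ closedNbhd G D := by
  unfold guessOf
  split_ifs with hxD hxN
  · exact iff_of_false (by omega) (not_not_intro (Or.inl hxD))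
  · exact iff_of_false (by omega) (not_not_intro hxN)
  · exact iff_of_true rfl hxN

lemma guessOf_ne_three (x : V) : guessOf G D x ≠ 3 := by
  unfold guessOf; split_ifs <;> simp

lemma isGuess_guessOf (Xi : Set V) : IsGuess Xi (guessOf G D) := by
  intro x _
  unfold guessOf; split_ifs <;> simp

lemma zset_guessOf_three (Xi : Set V) : Zset Xi (guessOf G D) 3 = ∅ :=
  eq_empty_of_forall_notMem fun x hx => guessOf_ne_three x hx.2

lemma zset_guessOf_four_subset (Xi : Set V) :
    Zset Xi (guessOf G D) 4 ⊆ (closedNbhd G D)ᶜ :=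
  fun _ hx => guessOf_eq_four_iff.1 hx.2

variable (hD : IsVeDomSet G D)
include hD

theorem validGuess_guessOf (Xi : Set V) : ValidGuess G Xi (guessOf G D) := by
  have hind := (isVeDomSet_iff_isIndepSet_compl_closedNbhd).1 hD
  refine ⟨?_, ?_, ?_⟩
  · intro x hx y hy hxy
    exact zset_guessOf_four_subset Xi hy (Or.inr ⟨x, guessOf_eq_one_iff.1 hx.2, hxy⟩)
  · intro _ _ y hy
    simp [zset_guessOf_three] at hy
  · intro u hu v hv
    exact hind u (zset_guessOf_four_subset Xi hu) v (zset_guessOf_four_subset Xi hv)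

theorem isPartialVeDom_guessOf (Xi : Set V) : IsPartialVeDom G univ Xi (guessOf G D) D := by
  refine ⟨subset_univ D, ?_, ?_, ?_, ?_, ?_⟩
  · ext x
    simp [Zset, guessOf_eq_one_iff, and_comm]
  · rintro x ⟨-, hx⟩
    obtain ⟨hxD, hxN | ⟨d, hd, hdx⟩⟩ := guessOf_eq_two_iff.1 hx
    · exact absurd hxN hxD
    · exact ⟨mem_univ x, hxD, d, hd, hdx⟩
  · rw [zset_guessOf_three, empty_inter]
  · rw [closedNbrIn_univ]
    exact disjoint_compl_left.mono_left (zset_guessOf_four_subset Xi) |>.inter_eq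
  · rw [zset_guessOf_three, sdiff_empty, closedNbrIn_univ, ← compl_eq_univ_sdiff]
    exact (isVeDomSet_iff_isIndepSet_compl_closedNbhd).1 hD

end GuessOf

theorem root_node_gives_veDomNum_general
    {V ι : Type*} (G : SimpleGraph V) (T : SimpleGraph ι)
    (X : ι → Set V) (r : ι) (hTD : IsTreeDecomp G T X) :
    (∀ g : V → ℕ, IsGuess (X r) g → Zset (X r) g 3 = ∅ →
      ∀ S : Set V, IsPartialVeDom G (SubtreeVerts T X r r) (X r) g S →
        IsVeDomSet G S) ∧
    veDomNumE G = sInf {m : ℕ∞ | ∃ g : V → ℕ, IsGuess (X r) g ∧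
      ValidGuess G (X r) g ∧ Zset (X r) g 3 = ∅ ∧
      m = Dnum G (SubtreeVerts T X r r) (X r) g} := by
  obtain ⟨-, hcover, -, -⟩ := hTD
  rw [subtreeVerts_self_eq_univ T X r hcover]
  refine ⟨fun g _ h3 S hS => hS.isVeDomSet h3, le_antisymm ?_ ?_⟩
  · refine le_sInf ?_
    rintro _ ⟨g, -, -, h3, rfl⟩
    exact le_sInf fun _ ⟨S, hS, hn⟩ => sInf_le ⟨S, hS.isVeDomSet h3, hn⟩
  · refine le_sInf fun _ ⟨D, hD, hn⟩ => ?_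
    have hDnum : Dnum G univ (X r) (guessOf G D) ≤ _ :=
      sInf_le ⟨D, isPartialVeDom_guessOf hD (X r), hn⟩
    exact le_trans (sInf_le ⟨guessOf G D, isGuess_guessOf (X r), validGuess_guessOf hD (X r),
      zset_guessOf_three (X r), rfl⟩) hDnum

/-- At the root `r` of a tree-decomposition (`G_r = G`): every partial
ve-dominating set of a guessing `g` on `X r` with `Z_3(g) = ∅` is a
ve-dominating set of `G`, and `γ_ve(G)` is the minimum of `D(g)` over all
valid guessings `g` on `X r` with `Z_3(g) = ∅`. -/
theorem root_node_gives_veDomNum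
    {V ι : Type*} [Fintype V] (G : SimpleGraph V) (T : SimpleGraph ι)
    (X : ι → Set V) (r : ι) (hTD : IsTreeDecomp G T X) :
    (∀ g : V → ℕ, IsGuess (X r) g → Zset (X r) g 3 = ∅ →
      ∀ S : Set V, IsPartialVeDom G (SubtreeVerts T X r r) (X r) g S →
        IsVeDomSet G S) ∧
    veDomNumE G = sInf {m : ℕ∞ | ∃ g : V → ℕ, IsGuess (X r) g ∧
      ValidGuess G (X r) g ∧ Zset (X r) g 3 = ∅ ∧
      m = Dnum G (SubtreeVerts T X r r) (X r) g} :=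
  root_node_gives_veDomNum_general G T X r hTD
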